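/- Let u = (u(x)|u'(x)) and v = (v(x)|v'(x)) be elements of Z_2[x]/(x^α-1) × Z_4[x]/(x^β-1) such that u(x)∘v(x) = 0 in Z_4[x]/(x^m-1) where m = lcm(α,β). If u(x) = 0 or v(x) = 0, then u'(x)v'*(x) ≡ 0 (mod x^β - 1) over Z_4. -/

import Mathlib

open Polynomial

/-- Coefficientwise lift of a binary polynomial to `Z₄[x]`, with
coefficients in `{0,1} ⊆ Z₄`. -/
noncomputable def lift24 (p : Polynomial (ZMod 2)) : Polynomial (ZMod 4) :=
  ∑ i ∈ p.support, C (((p.coeff i).val : ℕ) : ZMod 4) * X ^ i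

/-- `θ_k(x^n) = ∑_{i=0}^{k-1} x^{ni}` in `Z₄[x]`. -/
noncomputable def thetaPow (k n : ℕ) : Polynomial (ZMod 4) :=
  ∑ i ∈ Finset.range k, X ^ (n * i)

/-- The bilinear map `∘`, as a polynomial in `Z₄[x]` (to be reduced modulo
`x^m - 1`, `m = lcm(α,β)`). -/
noncomputable def circ (α β : ℕ) (u v : Polynomial (ZMod 2))
    (u' v' : Polynomial (ZMod 4)) : Polynomial (ZMod 4) :=
  2 * lift24 u * thetaPow (Nat.lcm α β / α) α *
      X ^ (Nat.lcm α β - 1 - v.natDegree) * lift24 v.reverse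
    + u' * thetaPow (Nat.lcm α β / β) β *
      X ^ (Nat.lcm α β - 1 - v'.natDegree) * v'.reverse

/-!
When `u = 0` or `v = 0`, `u ∘ v` is `θ · u' v'* x^e` with `θ = θ_{m/β}(x^β)`, and
`(x^β - 1) θ = x^m - 1`. Since `x^m - 1` is monic, `θ` is a non-zero-divisor and cancels,
leaving `x^β - 1 ∣ u' v'* x^e`; finally `x^e` is a unit modulo `x^β - 1`.
-/

section
variable {R : Type*} [CommRing R]

theorem X_pow_sub_one_mul_geom_sum (n k : ℕ) :
    (X ^ n - 1 : R[X]) * ∑ i ∈ Finset.range k, X ^ (n * i) = X ^ (n * k) - 1 := by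
  simp_rw [pow_mul]
  rw [mul_comm, geom_sum_mul]

theorem isLeftRegular_geom_sum_X_pow {n k : ℕ} (hnk : n * k ≠ 0) :
    IsLeftRegular (∑ i ∈ Finset.range k, X ^ (n * i) : R[X]) := by
  have hmonic : ((X ^ n - 1 : R[X]) * ∑ i ∈ Finset.range k, X ^ (n * i)).Monic := by
    rw [X_pow_sub_one_mul_geom_sum, ← C_1]
    exact monic_X_pow_sub_C 1 hnk
  exact hmonic.isRegular.left.of_mul

theorem isCoprime_X_pow_sub_one_X {n : ℕ} (hn : 0 < n) : IsCoprime (X ^ n - 1 : R[X]) X :=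
  ⟨-1, X ^ (n - 1), by rw [← pow_succ, Nat.sub_add_cancel hn]; ring⟩

theorem X_pow_sub_one_dvd_of_dvd_mul_X_pow {n : ℕ} (hn : 0 < n) {p : R[X]} {e : ℕ}
    (h : X ^ n - 1 ∣ p * X ^ e) : X ^ n - 1 ∣ p :=
  (isCoprime_X_pow_sub_one_X hn).pow_right.dvd_of_dvd_mul_right h

end

theorem circ_eq_of_eq_zero_or_eq_zero {α β : ℕ} {u v : Polynomial (ZMod 2)}
    (u' v' : Polynomial (ZMod 4)) (h : u = 0 ∨ v = 0) :
    circ α β u v u' v' = thetaPow (Nat.lcm α β / β) β *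
      (u' * v'.reverse * X ^ (Nat.lcm α β - 1 - v'.natDegree)) := by
  rcases h with rfl | rfl <;>
    simp only [circ, lift24, reverse_zero, support_zero, Finset.sum_empty, mul_zero,
      zero_mul, zero_add] <;> ring

theorem quaternary_part_orthogonality (α β : ℕ) (hα : 0 < α) (hβ : 0 < β)
    (u v : Polynomial (ZMod 2)) (u' v' : Polynomial (ZMod 4))
    (hcirc : (X ^ Nat.lcm α β - 1 : Polynomial (ZMod 4)) ∣ circ α β u v u' v')
    (hzero : u = 0 ∨ v = 0) :
    (X ^ β - 1 : Polynomial (ZMod 4)) ∣ u' * v'.reverse := by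
  set k := Nat.lcm α β / β
  have hk : β * k = Nat.lcm α β := Nat.mul_div_cancel' (Nat.dvd_lcm_right α β)
  have hθ : (X ^ β - 1) * thetaPow k β = X ^ Nat.lcm α β - 1 := by
    rw [thetaPow, X_pow_sub_one_mul_geom_sum, hk]
  have hθ_reg : IsLeftRegular (thetaPow k β) :=
    isLeftRegular_geom_sum_X_pow (by rw [hk]; exact (Nat.lcm_pos hα hβ).ne')
  rw [circ_eq_of_eq_zero_or_eq_zero u' v' hzero, ← hθ, mul_comm,
    hθ_reg.dvd_cancel_left] at hcirc
  exact X_pow_sub_one_dvd_of_dvd_mul_X_pow hβ hcirc
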